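/- Let T be a transducer that does not satisfy the weak twinning property. Then there exists a run q₁ →^{u|u₁} q₁ →^{v|v₁} q₁ →^{u|u₂} q₂ →^{v|v₂} q₂ in T such that for every n ∈ ℕ, |Δ(u₁v₁ⁿ, u₂v₂ⁿ)| ≥ n. -/

import Mathlib

variable {S G : Type}

def wordFG (w : List G) : FreeGroup G := (w.map FreeGroup.of).prod

def delta (v w : List G) : FreeGroup G := (wordFG v)⁻¹ * wordFG w

def dlen [DecidableEq G] (v w : List G) : ℕ := (delta v w).norm

def wpow (v : List G) (n : ℕ) : List G := (List.replicate n v).flatten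

structure NFT (S G Q : Type) where
  E : Set (Q × S × List G × Q)
  I : Set Q
  F : Set Q
  out : Q → List G

namespace NFT

variable {Q Q₁ Q₂ : Type}

inductive Run (T : NFT S G Q) : Q → List S → List G → Q → Prop
  | nil (q : Q) : Run T q [] [] q
  | cons {q q' q'' : Q} {a : S} {w : List G} {u : List S} {v : List G} :
      (q, a, w, q') ∈ T.E → Run T q' u v q'' → Run T q (a :: u) (w ++ v) q''

def Rel (T : NFT S G Q) (u : List S) (v : List G) : Prop :=
  ∃ i t w, i ∈ T.I ∧ t ∈ T.F ∧ T.Run i u w t ∧ v = w ++ T.out t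

def Trim (T : NFT S G Q) : Prop :=
  ∀ q : Q, ∃ i t u₁ w₁ u₂ w₂, i ∈ T.I ∧ t ∈ T.F ∧ T.Run i u₁ w₁ q ∧ T.Run q u₂ w₂ t

def WTP (T : NFT S G Q) : Prop :=
  ∀ q₁ q₂ (u v : List S) (u₁ u₂ v₁ v₂ : List G), T.Run q₁ u u₁ q₁ → T.Run q₁ v v₁ q₁ →
    T.Run q₁ u u₂ q₂ → T.Run q₂ v v₂ q₂ →
    delta u₁ u₂ = delta (u₁ ++ v₁) (u₂ ++ v₂)

def Seq (T : NFT S G Q) : Prop :=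
  (∃ q₀, T.I = {q₀}) ∧
  ∀ q a w₁ q₁ w₂ q₂, (q, a, w₁, q₁) ∈ T.E → (q, a, w₂, q₂) ∈ T.E → w₁ = w₂ ∧ q₁ = q₂

end NFT

/-!
Put `a = wordFG v₁`, `b = wordFG v₂` and `d = delta u₁ u₂` in the free group, so that
`Δ(u₁v₁ⁿ, u₂v₂ⁿ) = a⁻ⁿ d bⁿ`; the failure of the weak twinning property says `a d ≠ d b`.
Up to conjugation `a` and `b` are cyclically reduced, so the reduced word of `aⁿ` is the `n`-fold
repetition of that of `a`. If `|a| ≠ |b|`, the triangle inequality gives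
`|a⁻ⁿ d bⁿ| ≥ n - |d|`. If `|a| = |b|`, first replace `d` by some `d bᵏ` past which no letter of
`bⁿ` cancels in `d bⁿ`. Then either the words of `aⁿ` and `d bⁿ` eventually disagree at a fixed
position, and then `|a⁻ⁿ d bⁿ|` grows like `2n|a|`, or each word of `aⁿ` is a prefix
of that of `d bⁿ`, which forces `a d = d b`. A bound `n - C` becomes `n` after replacing
`u` by `u v^C`.
-/

theorem List.exists_longest_common_prefix {β : Type*} :
    ∀ X Y : List β, ∃ P X₁ Y₁, X = P ++ X₁ ∧ Y = P ++ Y₁ ∧ ∀ a ∈ X₁.head?, ∀ b ∈ Y₁.head?, a ≠ b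
  | [], Y => ⟨[], [], Y, rfl, rfl, by simp⟩
  | a :: X, [] => ⟨[], a :: X, [], rfl, rfl, by simp⟩
  | a :: X, b :: Y => by
    by_cases hab : a = b
    · obtain ⟨P, X₁, Y₁, rfl, rfl, h⟩ := exists_longest_common_prefix X Y
      exact ⟨a :: P, X₁, Y₁, rfl, by rw [hab]; rfl, h⟩
    · exact ⟨[], a :: X, b :: Y, rfl, rfl, by simpa using hab⟩

namespace FreeGroup

variable {α : Type*} [DecidableEq α]

theorem toWord_inv_mul_of_toWord_eq_append {x y : FreeGroup α} {P X Y : List (α × Bool)}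
    (hx : x.toWord = P ++ X) (hy : y.toWord = P ++ Y)
    (hXY : ∀ a ∈ X.head?, ∀ b ∈ Y.head?, a ≠ b) :
    (x⁻¹ * y).toWord = invRev X ++ Y := by
  have hmk : x⁻¹ * y = mk (invRev X ++ Y) := by
    rw [← mk_toWord (x := x), ← mk_toWord (x := y), hx, hy, ← mul_mk, ← mul_mk, ← mul_mk,
      ← inv_mk, mul_inv_rev]
    group
  rw [hmk, toWord_mk]
  refine IsReduced.reduce_eq (List.isChain_append.mpr ⟨?_, ?_, ?_⟩)
  · have h : IsReduced (x⁻¹.toWord) := isReduced_toWord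
    rw [toWord_inv, hx, invRev_append] at h
    exact h.infix (List.prefix_append _ _).isInfix
  · have h : IsReduced y.toWord := isReduced_toWord
    rw [hy] at h
    exact h.infix (List.suffix_append _ _).isInfix
  · intro a' ha b hb
    obtain ⟨a, hX, rfl⟩ : ∃ a ∈ X.head?, a' = (a.1, !a.2) := by
      cases X <;> simp_all [invRev]
    have hne := hXY a hX b hb
    rcases a with ⟨a, s⟩; rcases b with ⟨b, t⟩
    rintro rfl
    cases s <;> cases t <;> simp_all

theorem exists_conj_isCyclicallyReduced (x : FreeGroup α) :
    ∃ c s : FreeGroup α, x = c * s * c⁻¹ ∧ IsCyclicallyReduced s.toWord := by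
  have hcr := reduceCyclically.isCyclicallyReduced (isReduced_toWord (x := x))
  refine ⟨mk (reduceCyclically.conjugator x.toWord), mk (reduceCyclically x.toWord), ?_, ?_⟩
  · conv_lhs =>
      rw [← mk_toWord (x := x), ← reduceCyclically.conj_conjugator_reduceCyclically x.toWord]
    rw [← mul_mk, ← mul_mk, inv_mk]
  · rwa [toWord_mk, hcr.isReduced.reduce_eq]

theorem IsCyclicallyReduced.toWord_pow {s : FreeGroup α} (hs : IsCyclicallyReduced s.toWord)
    (n : ℕ) : (s ^ n).toWord = (List.replicate n s.toWord).flatten := by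
  rw [FreeGroup.toWord_pow, (hs.flatten_replicate n).isReduced.reduce_eq]

theorem IsCyclicallyReduced.toWord_pow_add {s : FreeGroup α}
    (hs : IsCyclicallyReduced s.toWord) (m n : ℕ) :
    (s ^ (m + n)).toWord = (s ^ m).toWord ++ (s ^ n).toWord := by
  simp only [hs.toWord_pow, List.replicate_add, List.flatten_append]

theorem IsCyclicallyReduced.norm_pow {s : FreeGroup α} (hs : IsCyclicallyReduced s.toWord)
    (n : ℕ) : (s ^ n).norm = n * s.norm := by
  simp [norm, hs.toWord_pow]

theorem exists_toWord_mul_pow_mul_pow_eq_append {t : FreeGroup α}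
    (ht : IsCyclicallyReduced t.toWord) (e : FreeGroup α) :
    ∃ n₀, ∀ m, (e * t ^ n₀ * t ^ m).toWord = (e * t ^ n₀).toWord ++ (t ^ m).toWord := by
  -- Once `tⁿ⁰` is at least as long as `e⁻¹`, either all of `e` cancels against `tⁿ⁰` or the
  -- cancellation stops strictly inside both words; in either case later copies of `t` survive.
  refine ⟨e.norm, ?_⟩
  obtain ⟨P, X, Y, hX, hY, hXY⟩ :=
    List.exists_longest_common_prefix (e⁻¹).toWord (t ^ e.norm).toWord
  have hhead : ∀ m, ∀ a ∈ X.head?, ∀ b ∈ (Y ++ (t ^ m).toWord).head?, a ≠ b := by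
    intro m a ha b hb
    rcases Y with _ | ⟨c, Y⟩
    · have h₁ : e.norm = P.length + X.length := by
        rw [← norm_inv_eq, norm, hX, List.length_append]
      have h₂ : e.norm * t.norm = P.length := by
        rw [← ht.norm_pow, norm, hY, List.append_nil]
      rcases Nat.eq_zero_or_pos t.norm with h0 | hpos
      · have : (t ^ m).toWord = [] := by
          rw [← List.length_eq_zero_iff, ← norm, ht.norm_pow, h0, mul_zero]
        simp [this] at hb
      · have : X = [] := by
          rw [← List.length_eq_zero_iff]
          nlinarith
        simp [this] at ha
    · exact hXY a ha b (by simpa using hb)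
  have key : ∀ m, (e * t ^ e.norm * t ^ m).toWord = invRev X ++ Y ++ (t ^ m).toWord := by
    intro m
    rw [List.append_assoc, ← toWord_inv_mul_of_toWord_eq_append hX _ (hhead m), inv_inv,
      mul_assoc, ← pow_add]
    rw [ht.toWord_pow_add, hY, List.append_assoc]
  intro m
  have h0 := key 0
  rw [pow_zero, mul_one, toWord_one, List.append_nil] at h0
  rw [key, h0]

theorem norm_mul_mul_le (x y z : FreeGroup α) : (x * y * z).norm ≤ x.norm + y.norm + z.norm :=
  (norm_mul_le _ _).trans (Nat.add_le_add_right (norm_mul_le x y) _)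

def GrowsLinearly (f : ℕ → FreeGroup α) : Prop :=
  ∃ C, ∀ n, n ≤ (f n).norm + C

namespace GrowsLinearly

variable {f : ℕ → FreeGroup α}

theorem mul_mul (hf : GrowsLinearly f) (x y : FreeGroup α) :
    GrowsLinearly fun n => x * f n * y := by
  obtain ⟨C, hC⟩ := hf
  refine ⟨C + x.norm + y.norm, fun n => ?_⟩
  have h := norm_mul_mul_le x⁻¹ (x * f n * y) y⁻¹
  rw [show x⁻¹ * (x * f n * y) * y⁻¹ = f n by group, norm_inv_eq, norm_inv_eq] at h
  linarith [hC n]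

theorem of_comp_add (k : ℕ) (hf : GrowsLinearly fun m => f (k + m)) : GrowsLinearly f := by
  obtain ⟨C, hC⟩ := hf
  refine ⟨C + k, fun n => ?_⟩
  rcases le_or_gt k n with h | h
  · obtain ⟨m, rfl⟩ := Nat.exists_eq_add_of_le h
    linarith [hC m]
  · omega

theorem exists_le_norm_comp_add (hf : GrowsLinearly f) : ∃ j, ∀ n, n ≤ (f (j + n)).norm := by
  obtain ⟨C, hC⟩ := hf
  exact ⟨C, fun n => by linarith [hC (C + n)]⟩

end GrowsLinearly

theorem growsLinearly_of_norm_ne {s t : FreeGroup α} (hs : IsCyclicallyReduced s.toWord)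
    (ht : IsCyclicallyReduced t.toWord) (hst : s.norm ≠ t.norm) (e : FreeGroup α) :
    GrowsLinearly fun n => (s ^ n)⁻¹ * e * t ^ n := by
  refine ⟨e.norm, fun n => ?_⟩
  have hs' := norm_mul_mul_le e (t ^ n) ((s ^ n)⁻¹ * e * t ^ n)⁻¹
  have ht' := norm_mul_mul_le e⁻¹ (s ^ n) ((s ^ n)⁻¹ * e * t ^ n)
  rw [show e * t ^ n * ((s ^ n)⁻¹ * e * t ^ n)⁻¹ = s ^ n by group, norm_inv_eq] at hs'
  rw [show e⁻¹ * s ^ n * ((s ^ n)⁻¹ * e * t ^ n) = t ^ n by group, norm_inv_eq] at ht'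
  rw [hs.norm_pow, ht.norm_pow] at hs' ht'
  rcases Nat.lt_or_gt_of_ne hst with h | h
  · nlinarith [Nat.mul_le_mul_left n h]
  · nlinarith [Nat.mul_le_mul_left n h]

theorem mul_eq_mul_of_forall_toWord_pow_prefix {s t e : FreeGroup α}
    (hs : IsCyclicallyReduced s.toWord) (ht : IsCyclicallyReduced t.toWord)
    (hst : s.norm = t.norm) (he : ∀ m, (e * t ^ m).toWord = e.toWord ++ (t ^ m).toWord)
    (hpre : ∀ m, (s ^ m).toWord <+: (e * t ^ m).toWord) :
    s * e = e * t := by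
  rcases Nat.eq_zero_or_pos s.norm with h0 | hpos
  · rw [norm_eq_zero.mp h0, norm_eq_zero.mp (hst.symm.trans h0), one_mul, mul_one]
  set m := e.norm
  have hlen : (s ^ (1 + m)).toWord.length = (1 + m) * s.norm := hs.norm_pow _
  have hm : m + s.norm ≤ (1 + m) * s.norm := by nlinarith
  have h₁ : e.toWord ++ t.toWord <+: (s ^ (1 + m)).toWord := by
    have hET : (e * t ^ (1 + m)).toWord = e.toWord ++ t.toWord ++ (t ^ m).toWord := by
      rw [he, ht.toWord_pow_add, pow_one, List.append_assoc]
    refine List.prefix_of_prefix_length_le (hET ▸ List.prefix_append _ _) (hpre _) ?_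
    rw [List.length_append, hlen]
    change m + t.norm ≤ _
    rwa [← hst]
  have h₂ : s.toWord ++ e.toWord <+: (s ^ (1 + m)).toWord := by
    have h : (s ^ (1 + m)).toWord <+: s.toWord ++ e.toWord ++ (t ^ m).toWord := by
      rw [hs.toWord_pow_add, pow_one, List.append_assoc, List.prefix_append_right_inj, ← he]
      exact hpre m
    refine List.prefix_of_prefix_length_le (List.prefix_append _ _) h ?_
    rw [List.length_append, hlen]
    change s.norm + m ≤ _
    omega
  have hlen₂ : (s.toWord ++ e.toWord).length = (e.toWord ++ t.toWord).length := by
    simp only [List.length_append]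
    change s.norm + m = m + t.norm
    omega
  have hword := (List.prefix_of_prefix_length_le h₂ h₁ hlen₂.le).eq_of_length hlen₂
  rw [← mk_toWord (x := s), ← mk_toWord (x := e), ← mk_toWord (x := t), mul_mk, mul_mk, hword]

theorem le_norm_inv_pow_mul_mul_pow_of_not_prefix {s t e : FreeGroup α}
    (hs : IsCyclicallyReduced s.toWord) (ht : IsCyclicallyReduced t.toWord)
    (hst : s.norm = t.norm) (he : ∀ m, (e * t ^ m).toWord = e.toWord ++ (t ^ m).toWord)
    {m₀ m : ℕ} (hm₀ : ¬(s ^ m₀).toWord <+: (e * t ^ m₀).toWord) (hm : m₀ ≤ m) :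
    2 * (m * s.norm) ≤ ((s ^ m)⁻¹ * e * t ^ m).norm + 2 * (m₀ * s.norm) := by
  have hlen : ∀ m, (s ^ m).toWord.length = m * s.norm := hs.norm_pow
  have hlen' : ∀ m, (e * t ^ m).toWord.length = e.norm + m * s.norm := fun m => by
    rw [he, List.length_append, ← norm, ← norm, ht.norm_pow, hst]
  obtain ⟨P, X, Y, hX, hY, hXY⟩ :=
    List.exists_longest_common_prefix (s ^ m).toWord (e * t ^ m).toWord
  have hnorm : ((s ^ m)⁻¹ * e * t ^ m).norm = X.length + Y.length := by
    rw [norm, mul_assoc, toWord_inv_mul_of_toWord_eq_append hX hY hXY, List.length_append,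
      invRev_length]
  have hP : P.length < m₀ * s.norm := by
    by_contra! hP
    obtain ⟨k, rfl⟩ := Nat.exists_eq_add_of_le hm
    have hSP : (s ^ m₀).toWord <+: P :=
      List.prefix_of_prefix_length_le (hX ▸ hs.toWord_pow_add m₀ k ▸ List.prefix_append _ _)
        (List.prefix_append _ _) (by rwa [hlen])
    refine hm₀ (List.prefix_of_prefix_length_le (hSP.trans (hY ▸ List.prefix_append _ _)) ?_ ?_)
    · rw [he, he, ht.toWord_pow_add, ← List.append_assoc]
      exact List.prefix_append _ _
    · rw [hlen, hlen']
      omega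
  have h₁ := congrArg List.length hX
  have h₂ := congrArg List.length hY
  rw [List.length_append, hlen] at h₁
  rw [List.length_append, hlen'] at h₂
  omega

theorem growsLinearly_of_toWord_mul_pow_eq_append {s t e : FreeGroup α}
    (hs : IsCyclicallyReduced s.toWord) (ht : IsCyclicallyReduced t.toWord)
    (hst : s.norm = t.norm) (he : ∀ m, (e * t ^ m).toWord = e.toWord ++ (t ^ m).toWord)
    (hne : s * e ≠ e * t) :
    GrowsLinearly fun n => (s ^ n)⁻¹ * e * t ^ n := by
  have hpos : 0 < s.norm := by
    refine Nat.pos_of_ne_zero fun h0 => hne ?_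
    rw [norm_eq_zero.mp h0, norm_eq_zero.mp (hst.symm.trans h0), one_mul, mul_one]
  obtain ⟨m₀, hm₀⟩ :=
    not_forall.mp (mt (mul_eq_mul_of_forall_toWord_pow_prefix hs ht hst he) hne)
  refine ⟨2 * (m₀ * s.norm), fun m => ?_⟩
  rcases lt_or_ge m m₀ with hm | hm
  · nlinarith
  · nlinarith [le_norm_inv_pow_mul_mul_pow_of_not_prefix hs ht hst he hm₀ hm]

theorem growsLinearly_of_norm_eq {s t : FreeGroup α} (hs : IsCyclicallyReduced s.toWord)
    (ht : IsCyclicallyReduced t.toWord) (hst : s.norm = t.norm) {e : FreeGroup α}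
    (hne : s * e ≠ e * t) :
    GrowsLinearly fun n => (s ^ n)⁻¹ * e * t ^ n := by
  obtain ⟨n₀, he⟩ := exists_toWord_mul_pow_mul_pow_eq_append ht e
  have hne' : s * (e * t ^ n₀) ≠ e * t ^ n₀ * t := by
    contrapose! hne
    calc s * e = s * (e * t ^ n₀) * (t ^ n₀)⁻¹ := by group
      _ = e * t := by rw [hne]; group
  refine .of_comp_add n₀ ?_
  convert (growsLinearly_of_toWord_mul_pow_eq_append hs ht hst he hne').mul_mul (s ^ n₀)⁻¹ 1
    using 2 with m
  simp only [pow_add]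
  group

theorem growsLinearly_inv_pow_mul_mul_pow {a b d : FreeGroup α} (hne : a * d ≠ d * b) :
    GrowsLinearly fun n => (a ^ n)⁻¹ * d * b ^ n := by
  obtain ⟨c, s, rfl, hs⟩ := exists_conj_isCyclicallyReduced a
  obtain ⟨k, t, rfl, ht⟩ := exists_conj_isCyclicallyReduced b
  have hne' : s * (c⁻¹ * d * k) ≠ c⁻¹ * d * k * t := by
    contrapose! hne
    calc c * s * c⁻¹ * d = c * (s * (c⁻¹ * d * k)) * k⁻¹ := by group
      _ = d * (k * t * k⁻¹) := by rw [hne]; group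
  have hg : GrowsLinearly fun n => (s ^ n)⁻¹ * (c⁻¹ * d * k) * t ^ n := by
    by_cases hst : s.norm = t.norm
    · exact growsLinearly_of_norm_eq hs ht hst hne'
    · exact growsLinearly_of_norm_ne hs ht hst _
  convert hg.mul_mul c k⁻¹ using 2 with n
  simp only [conj_pow]
  group

end FreeGroup

theorem wordFG_append (l₁ l₂ : List G) : wordFG (l₁ ++ l₂) = wordFG l₁ * wordFG l₂ := by
  simp [wordFG]

theorem wpow_add (v : List G) (m n : ℕ) : wpow v (m + n) = wpow v m ++ wpow v n := by
  simp only [wpow, List.replicate_add, List.flatten_append]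

theorem wpow_one (v : List G) : wpow v 1 = v := by
  simp [wpow]

theorem wordFG_wpow (v : List G) (n : ℕ) : wordFG (wpow v n) = wordFG v ^ n := by
  induction n with
  | zero => rfl
  | succ n ih => rw [wpow_add, wordFG_append, ih, wpow_one, pow_succ]

theorem delta_append (u₁ u₂ v₁ v₂ : List G) :
    delta (u₁ ++ v₁) (u₂ ++ v₂) = (wordFG v₁)⁻¹ * delta u₁ u₂ * wordFG v₂ := by
  simp only [delta, wordFG_append]
  group

namespace NFT

variable {Q : Type} {T : NFT S G Q}

theorem Run.append {q q' q'' : Q} {u u' : List S} {w w' : List G}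
    (h : T.Run q u w q') (h' : T.Run q' u' w' q'') : T.Run q (u ++ u') (w ++ w') q'' := by
  induction h with
  | nil => exact h'
  | cons he _ ih =>
    rw [List.cons_append, List.append_assoc]
    exact .cons he (ih h')

theorem Run.wpow {q : Q} {v : List S} {w : List G} (h : T.Run q v w q) (n : ℕ) :
    T.Run q (wpow v n) (wpow w n) q := by
  induction n with
  | zero => exact .nil q
  | succ n ih =>
    rw [wpow_add, wpow_add, wpow_one, wpow_one]
    exact ih.append h

end NFT

/-- If `T` does not satisfy the weak twinning property, then there is a run
`q₁ →u|u₁ q₁ →v|v₁ q₁ →u|u₂ q₂ →v|v₂ q₂` such that for all `n`, `|Δ(u₁v₁ⁿ,u₂v₂ⁿ)| ≥ n`. -/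
theorem exists_diverging_delay_of_not_wtp [DecidableEq G] {Q : Type}
    (T : NFT S G Q) (h : ¬ T.WTP) :
    ∃ (q₁ q₂ : Q) (u v : List S) (u₁ u₂ v₁ v₂ : List G),
      T.Run q₁ u u₁ q₁ ∧ T.Run q₁ v v₁ q₁ ∧ T.Run q₁ u u₂ q₂ ∧ T.Run q₂ v v₂ q₂ ∧
      ∀ n : ℕ, n ≤ dlen (u₁ ++ wpow v₁ n) (u₂ ++ wpow v₂ n) := by
  simp only [NFT.WTP, not_forall] at h
  obtain ⟨q₁, q₂, u, v, u₁, u₂, v₁, v₂, hu₁, hv₁, hu₂, hv₂, hne⟩ := h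
  have hcomm : wordFG v₁ * delta u₁ u₂ ≠ delta u₁ u₂ * wordFG v₂ := by
    contrapose! hne
    rw [delta_append, mul_assoc, ← hne]
    group
  have hgrow : FreeGroup.GrowsLinearly fun n => delta (u₁ ++ wpow v₁ n) (u₂ ++ wpow v₂ n) := by
    simpa only [delta_append, wordFG_wpow] using FreeGroup.growsLinearly_inv_pow_mul_mul_pow hcomm
  obtain ⟨j, hj⟩ := hgrow.exists_le_norm_comp_add
  refine ⟨q₁, q₂, u ++ wpow v j, v, u₁ ++ wpow v₁ j, u₂ ++ wpow v₂ j, v₁, v₂,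
    hu₁.append (hv₁.wpow j), hv₁, hu₂.append (hv₂.wpow j), hv₂, fun n => ?_⟩
  simpa only [dlen, List.append_assoc, wpow_add] using hj n
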